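/- Let J = [S,T] be a Tamari interval and s a segment of the left border of T. Define max(Y *_s J) by attaching a new left edge at segment s of T, and min(Y *_s J) = Y\S (attaching a left edge at the root edge of S). Then Y\S ≤ max(Y *_s J), so Y *_s J is a Tamari interval, and it is indecomposable. -/

import Mathlib

/-!
Since `S ≤ T`, rotating inside the right subtree gives `Y\S ≤ Y\T = addLeft 0 T`, and each
rotation `·(l·r) ↦ (·l)·r` pushes the new left edge one segment further down the left border
of `T`, so `Y\T ≤ addLeft s T`. In a graft `A / (l·r) = (A / l)·r` the left subtree `A / l`
is nonempty when `A` is, whereas the minimum `Y\S` has an empty left subtree; so `Y\S` is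
indecomposable, and a decomposition of the interval would decompose its minimum.
-/

/-- Planar binary trees, counted by internal nodes. -/
inductive PBT where
  | leaf : PBT
  | node : PBT → PBT → PBT
deriving DecidableEq

namespace PBT

/-- Number of internal nodes. -/
def size : PBT → ℕ
  | leaf => 0
  | node l r => size l + size r + 1

/-- One rotation step, going up in the Tamari order: a right comb
configuration `a·(b·c)` is replaced by a left comb configuration `(a·b)·c`,
possibly deep inside the tree. -/
inductive Rot : PBT → PBT → Prop
  | rotate (a b c : PBT) : Rot (node a (node b c)) (node (node a b) c)
  | left {l l' : PBT} (r : PBT) : Rot l l' → Rot (node l r) (node l' r)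
  | right (l : PBT) {r r' : PBT} : Rot r r' → Rot (node l r) (node l r')

/-- The Tamari order: the reflexive-transitive closure of rotation. -/
def le (S T : PBT) : Prop := Relation.ReflTransGen Rot S T

/-- The unique tree with one internal node. -/
def Y : PBT := node leaf leaf

/-- `S / T`: graft the root of `S` onto the leftmost leaf of `T`. -/
def graftL : PBT → PBT → PBT
  | S, leaf => S
  | S, node l r => node (graftL S l) r

/-- `T₁ / T₂ / ⋯ / T_k` for a list of trees (the empty graft is the trivial tree). -/
def listGraft (L : List PBT) : PBT := L.foldr graftL leaf

/-- A (nontrivial) tree is indecomposable if it is not of the form `S / T`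
with `S`, `T` both nontrivial. -/
def Indec (T : PBT) : Prop :=
  T ≠ leaf ∧ ¬ ∃ S U : PBT, S ≠ leaf ∧ U ≠ leaf ∧ graftL S U = T

end PBT

/-- A pair `(S,T)` is a Tamari interval when `S ≤ T`. -/
def isItv (p : PBT × PBT) : Prop := PBT.le p.1 p.2

/-- Grafting of intervals, componentwise on minima and maxima:
`J/K = [min J / min K, max J / max K]`. -/
def igraft (p q : PBT × PBT) : PBT × PBT := (PBT.graftL p.1 q.1, PBT.graftL p.2 q.2)

/-- `I₁ / I₂ / ⋯ / I_k` for a list of intervals. -/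
def ilistGraft (L : List (PBT × PBT)) : PBT × PBT := L.foldr igraft (PBT.leaf, PBT.leaf)

/-- An interval is indecomposable if it is nontrivial and is not the graft `J/K`
of two nontrivial intervals. -/
def IndecItv (p : PBT × PBT) : Prop :=
  isItv p ∧ p.1 ≠ PBT.leaf ∧
    ¬ ∃ q r : PBT × PBT, isItv q ∧ isItv r ∧ q.1 ≠ PBT.leaf ∧ r.1 ≠ PBT.leaf ∧
      igraft q r = p

namespace PBT

/-- `Lb T`: the number of segments along the left border of `T`
(the edges on the path from the root to the leftmost leaf); `Lb Y = 2`. -/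
def Lb : PBT → ℕ
  | leaf => 1
  | node l _ => Lb l + 1

/-- `addLeft s T`: attach a new left edge at segment `s` (numbered from the root,
starting at `0`) of the left border of `T`. -/
def addLeft : ℕ → PBT → PBT
  | 0, T => node leaf T
  | _ + 1, leaf => leaf
  | s + 1, node l r => node (addLeft s l) r

end PBT

namespace PBT

lemma le_node_left {l l' : PBT} (r : PBT) (h : le l l') : le (node l r) (node l' r) :=
  Relation.ReflTransGen.lift (fun x => node x r) (fun _ _ h => Rot.left r h) _ _ h

lemma le_node_right (l : PBT) {r r' : PBT} (h : le r r') : le (node l r) (node l r') :=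
  Relation.ReflTransGen.lift (node l) (fun _ _ h => Rot.right l h) _ _ h

lemma node_leaf_le_addLeft (T : PBT) {s : ℕ} (hs : s < Lb T) :
    le (node leaf T) (addLeft s T) := by
  induction T generalizing s with
  | leaf =>
    obtain rfl : s = 0 := by simpa [Lb] using hs
    exact Relation.ReflTransGen.refl
  | node l r ih =>
    cases s with
    | zero => exact Relation.ReflTransGen.refl
    | succ s =>
      have hs' : s < Lb l := by simpa [Lb] using hs
      exact Relation.ReflTransGen.head (Rot.rotate leaf l r) (le_node_left r (ih hs'))

lemma graftL_ne_leaf {A : PBT} (hA : A ≠ leaf) (B : PBT) : graftL A B ≠ leaf := by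
  cases B with
  | leaf => exact hA
  | node l r => exact PBT.noConfusion

lemma indec_node_leaf (S : PBT) : Indec (node leaf S) := by
  refine ⟨PBT.noConfusion, ?_⟩
  rintro ⟨A, B, hA, hB, h⟩
  cases B with
  | leaf => exact hB rfl
  | node l r =>
    injection h with hleft
    exact graftL_ne_leaf hA l hleft

end PBT

lemma indecItv_of_indec_fst {p : PBT × PBT} (hp : isItv p) (h : PBT.Indec p.1) :
    IndecItv p := by
  refine ⟨hp, h.1, ?_⟩
  rintro ⟨q, r, -, -, hq, hr, rfl⟩
  exact h.2 ⟨q.1, r.1, hq, hr, rfl⟩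

theorem Y_graft_is_indecomposable_interval_general (S T : PBT)
    (hST : PBT.le S T) (s : ℕ) (hs : s < PBT.Lb T) :
    PBT.le (PBT.node PBT.leaf S) (PBT.addLeft s T) ∧
    IndecItv (PBT.node PBT.leaf S, PBT.addLeft s T) := by
  have hle : PBT.le (PBT.node PBT.leaf S) (PBT.addLeft s T) :=
    (PBT.le_node_right PBT.leaf hST).trans (PBT.node_leaf_le_addLeft T hs)
  exact ⟨hle, indecItv_of_indec_fst hle (PBT.indec_node_leaf S)⟩

/-- For a Tamari interval `J = [S,T]` and a segment `s` of the left border of `T`,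
the pair `Y *ₛ J = (Y\S, addLeft s T)` is again a Tamari interval, and it is
indecomposable. -/
theorem Y_graft_is_indecomposable_interval (S T : PBT)
    (hS : S ≠ PBT.leaf) (hST : PBT.le S T) (s : ℕ) (hs : s < PBT.Lb T) :
    PBT.le (PBT.node PBT.leaf S) (PBT.addLeft s T) ∧
    IndecItv (PBT.node PBT.leaf S, PBT.addLeft s T) :=
  Y_graft_is_indecomposable_interval_general S T hST s hs
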